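/- Let Γ be a group, G a topological group, P a closed subgroup of G, and K a compact subgroup of G such that every conjugate of P is of the form kPk⁻¹ for some k ∈ K. Let Λ ⊆ Γ be a subgroup, and let (ρ_i) be a sequence of homomorphisms Γ → G converging pointwise to a homomorphism ρ, such that for each i there exists k_i ∈ K with ρ_i(Λ) ⊆ k_i P k_i⁻¹. Then there exists k ∈ K with ρ(Λ) ⊆ kPk⁻¹; in other words, the set of homomorphisms sending Λ into some conjugate (by K) of P is closed under pointwise convergence. -/

import Mathlib

/-!
The pairs `(k, f) ∈ G × (Γ → G)` with `f(Λ) ⊆ kPk⁻¹` form a closed set, since `P` is closed and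
`(k, g) ↦ k⁻¹gk` is continuous. Projecting away the compact factor `K` keeps it closed, and
pointwise convergence is convergence in the product topology on `Γ → G`.
-/

open Filter

theorem IsCompact.isClosed_setOf_exists_mem_prod {X Y : Type*} [TopologicalSpace X]
    [TopologicalSpace Y] {K : Set X} {C : Set (X × Y)} (hK : IsCompact K) (hC : IsClosed C) :
    IsClosed {y | ∃ x ∈ K, (x, y) ∈ C} := by
  have : CompactSpace K := isCompact_iff_compactSpace.mp hK
  have hproj : {y | ∃ x ∈ K, (x, y) ∈ C} =
      Prod.snd '' ((fun p : K × Y => ((p.1 : X), p.2)) ⁻¹' C) := by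
    ext y; simp
  rw [hproj]
  exact isClosedMap_snd_of_compactSpace _ (hC.preimage (by fun_prop))

section

variable {Γ G : Type*} [Group G] [TopologicalSpace G] [IsTopologicalGroup G]

theorem isClosed_setOf_forall_mem_map_conj {P : Subgroup G} (hP : IsClosed (P : Set G))
    (Λ : Set Γ) :
    IsClosed {p : G × (Γ → G) | ∀ γ ∈ Λ, p.2 γ ∈ P.map (MulAut.conj p.1).toMonoidHom} := by
  simp only [Subgroup.mem_map_equiv, MulAut.conj_symm_apply, Set.ofPred_forall]
  exact isClosed_biInter fun γ _ => hP.preimage (by fun_prop)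

theorem isClosed_setOf_exists_forall_mem_map_conj {P : Subgroup G} (hP : IsClosed (P : Set G))
    {K : Set G} (hK : IsCompact K) (Λ : Set Γ) :
    IsClosed {f : Γ → G | ∃ k ∈ K, ∀ γ ∈ Λ, f γ ∈ P.map (MulAut.conj k).toMonoidHom} :=
  hK.isClosed_setOf_exists_mem_prod (isClosed_setOf_forall_mem_map_conj hP Λ)

end

theorem limit_sends_subgroup_into_conjugate_of_closed_subgroup_general
    {Γ G : Type*} [Group Γ] [Group G] [TopologicalSpace G] [IsTopologicalGroup G]
    (P K : Subgroup G) (hP : IsClosed (P : Set G)) (hK : IsCompact (K : Set G))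
    (Λ : Subgroup Γ) (ρ : ℕ → Γ →* G) (ρlim : Γ →* G)
    (hconv : ∀ γ : Γ, Filter.Tendsto (fun i => ρ i γ) Filter.atTop (nhds (ρlim γ)))
    (hin : ∀ i : ℕ, ∃ k ∈ K, ∀ γ ∈ Λ, ρ i γ ∈ P.map (MulAut.conj k).toMonoidHom) :
    ∃ k ∈ K, ∀ γ ∈ Λ, ρlim γ ∈ P.map (MulAut.conj k).toMonoidHom :=
  (isClosed_setOf_exists_forall_mem_map_conj hP hK (Λ : Set Γ)).mem_of_tendsto
    (tendsto_pi_nhds.mpr hconv) (Eventually.of_forall hin)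

/-- Let `Γ` be a group, `G` a Hausdorff topological group, `P` a closed subgroup and `K` a
compact subgroup such that every conjugate of `P` is of the form `kPk⁻¹` for some `k ∈ K`.
If a sequence of homomorphisms `ρᵢ : Γ →* G` converges pointwise to `ρ`, and each `ρᵢ` sends
the subgroup `Λ ≤ Γ` into some `K`-conjugate of `P`, then `ρ` sends `Λ` into some
`K`-conjugate of `P`.  (Abstracting Lemma 5.2: `G = SO(n,1)`, `P` minimal parabolic,
`K = SO(n)`.) -/
theorem limit_sends_subgroup_into_conjugate_of_closed_subgroup
    {Γ G : Type*} [Group Γ] [Group G] [TopologicalSpace G] [IsTopologicalGroup G] [T2Space G]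
    (P K : Subgroup G) (hP : IsClosed (P : Set G)) (hK : IsCompact (K : Set G))
    (hconj : ∀ g : G, ∃ k ∈ K,
      P.map (MulAut.conj g).toMonoidHom = P.map (MulAut.conj k).toMonoidHom)
    (Λ : Subgroup Γ) (ρ : ℕ → Γ →* G) (ρlim : Γ →* G)
    (hconv : ∀ γ : Γ, Filter.Tendsto (fun i => ρ i γ) Filter.atTop (nhds (ρlim γ)))
    (hin : ∀ i : ℕ, ∃ k ∈ K, ∀ γ ∈ Λ, ρ i γ ∈ P.map (MulAut.conj k).toMonoidHom) :
    ∃ k ∈ K, ∀ γ ∈ Λ, ρlim γ ∈ P.map (MulAut.conj k).toMonoidHom :=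
  limit_sends_subgroup_into_conjugate_of_closed_subgroup_general P K hP hK Λ ρ ρlim hconv hin
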